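/- Let Z_t denote both the subspace and the L²(a,b)-orthogonal projector onto Z_t, and set C_{t,1} := ‖(I − Z_t)K‖ and C := max{‖(I − Z_0)K‖, ‖(I − Z_0)K*‖} (operator norms on L²(a,b)). Then for every integer t ≥ 0 one has C_{t,1} ≤ C. -/

import Mathlib

open MeasureTheory Set
open scoped Classical

noncomputable section

/-- Lebesgue measure restricted to the interval `(a, b)`. -/
def μab (a b : ℝ) : Measure ℝ := volume.restrict (Ioo a b)

/-- The space `L²(a, b)`. -/
abbrev L2ab (a b : ℝ) := Lp ℝ 2 (μab a b)

/-- The class in `L²(a,b)` of a function `f` (junk value if `f ∉ L²`). -/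
def funToL2 (a b : ℝ) (f : ℝ → ℝ) : L2ab a b :=
  if h : MemLp f 2 (μab a b) then h.toLp f else 0

/-- The class in `L²(a,b)` of a polynomial. -/
def polyToL2 (a b : ℝ) (P : Polynomial ℝ) : L2ab a b := funToL2 a b fun x => P.eval x

/-- `𝒫_{n-1}`: the subspace of `L²(a,b)` consisting of (classes of) polynomials of
degree `< n`. -/
def polyLt (a b : ℝ) (n : ℕ) : Submodule ℝ (L2ab a b) where
  carrier := {f | ∃ P ∈ Polynomial.degreeLT ℝ n, (f : ℝ → ℝ) =ᵐ[μab a b] fun x => P.eval x}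
  zero_mem' := ⟨0, Submodule.zero_mem _, by
    filter_upwards [Lp.coeFn_zero (E := ℝ) (p := 2) (μ := μab a b)] with x hx
    simpa using hx⟩
  add_mem' := by
    rintro f g ⟨P, hP, hf⟩ ⟨Q, hQ, hg⟩
    refine ⟨P + Q, Submodule.add_mem _ hP hQ, ?_⟩
    filter_upwards [Lp.coeFn_add f g, hf, hg] with x h1 h2 h3
    simp only [Pi.add_apply] at h1
    exact h1.trans (by rw [h2, h3, Polynomial.eval_add])
  smul_mem' := by
    rintro c f ⟨P, hP, hf⟩
    refine ⟨c • P, Submodule.smul_mem _ c hP, ?_⟩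
    filter_upwards [Lp.coeFn_smul c f, hf] with x h1 h2
    simp only [Pi.smul_apply] at h1
    simp [h1, h2, Polynomial.eval_smul]

/-- The `L²(a,b)`-orthogonal projector onto `Z`, as an endomorphism of `L²(a,b)`. -/
def projCL {a b : ℝ} (Z : Submodule ℝ (L2ab a b)) [Z.HasOrthogonalProjection] :
    L2ab a b →L[ℝ] L2ab a b := Z.subtypeL.comp (Z.orthogonalProjectionOnto)

/-- `𝔠_{t,r} := ‖(I - Z_t) K^r‖`, the operator norm on `L²(a,b)`. -/
def Cnorm {a b : ℝ} (Z : ℕ → Submodule ℝ (L2ab a b)) [∀ t, FiniteDimensional ℝ (Z t)]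
    (K : L2ab a b →L[ℝ] L2ab a b) (t r : ℕ) : ℝ :=
  ‖(ContinuousLinearMap.id ℝ (L2ab a b) - projCL (Z t)) ∘L (K ^ r)‖

/-!
If `A` maps `Z` into `W`, then `(I - W) A = (I - W) A (I - Z)`, so
`‖(I - W) A‖ ≤ ‖A (I - Z)‖ = ‖((I - Z) A*)*‖ = ‖(I - Z) A*‖`.
Since `Z_{t+1}` contains both `K Z_t` and `K* Z_t`, the two quantities `‖(I - Z_t) K‖`
and `‖(I - Z_t) K*‖` bound each other with the index shifted by one, and an induction on `t`
bounds both by their maximum at `t = 0`.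
-/

open ContinuousLinearMap

section Adjoint

variable {𝕜 E F : Type*} [RCLike 𝕜]
  [NormedAddCommGroup E] [InnerProductSpace 𝕜 E] [NormedAddCommGroup F] [InnerProductSpace 𝕜 F]

theorem Submodule.starProjection_orthogonal_comp_eq_comp {Z : Submodule 𝕜 E}
    {W : Submodule 𝕜 F} [Z.HasOrthogonalProjection] [W.HasOrthogonalProjection]
    {A : E →L[𝕜] F} (hA : Z.map (A : E →ₗ[𝕜] F) ≤ W) :
    Wᗮ.starProjection ∘L A = Wᗮ.starProjection ∘L A ∘L Zᗮ.starProjection := by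
  ext x
  have hW : A (Z.starProjection x) ∈ W := hA ⟨_, Z.starProjection_apply_mem x, rfl⟩
  simp only [comp_apply, Submodule.starProjection_orthogonal_val, map_sub,
    Submodule.starProjection_orthogonal_apply_eq_zero hW, sub_zero]

theorem Submodule.norm_starProjection_orthogonal_comp_le_adjoint [CompleteSpace E]
    [CompleteSpace F] {Z : Submodule 𝕜 E}
    {W : Submodule 𝕜 F} [Z.HasOrthogonalProjection] [W.HasOrthogonalProjection]
    {A : E →L[𝕜] F} (hA : Z.map (A : E →ₗ[𝕜] F) ≤ W) :
    ‖Wᗮ.starProjection ∘L A‖ ≤ ‖Zᗮ.starProjection ∘L adjoint A‖ :=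
  calc ‖Wᗮ.starProjection ∘L A‖ = ‖Wᗮ.starProjection ∘L (A ∘L Zᗮ.starProjection)‖ := by
        rw [Submodule.starProjection_orthogonal_comp_eq_comp hA]
    _ ≤ ‖A ∘L Zᗮ.starProjection‖ :=
        (opNorm_comp_le _ _).trans
          (mul_le_of_le_one_left (norm_nonneg _) Wᗮ.starProjection_norm_le)
    _ = ‖adjoint (A ∘L Zᗮ.starProjection)‖ := (adjoint.norm_map _).symm
    _ = ‖Zᗮ.starProjection ∘L adjoint A‖ := by
        rw [adjoint_comp, (isSelfAdjoint_starProjection Zᗮ).adjoint_eq]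

end Adjoint

section Iteration

variable {𝕜 E : Type*} [RCLike 𝕜] [NormedAddCommGroup E] [InnerProductSpace 𝕜 E]
  [CompleteSpace E]

theorem norm_starProjection_orthogonal_comp_le_max_of_map_le {Z : ℕ → Submodule 𝕜 E}
    [∀ t, (Z t).HasOrthogonalProjection] {K : E →L[𝕜] E}
    (hK : ∀ s, (Z s).map (K : E →ₗ[𝕜] E) ≤ Z (s + 1))
    (hK' : ∀ s, (Z s).map (adjoint K : E →ₗ[𝕜] E) ≤ Z (s + 1)) (t : ℕ) :
    ‖(Z t)ᗮ.starProjection ∘L K‖ ≤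
        max ‖(Z 0)ᗮ.starProjection ∘L K‖ ‖(Z 0)ᗮ.starProjection ∘L adjoint K‖ ∧
      ‖(Z t)ᗮ.starProjection ∘L adjoint K‖ ≤
        max ‖(Z 0)ᗮ.starProjection ∘L K‖ ‖(Z 0)ᗮ.starProjection ∘L adjoint K‖ := by
  induction t with
  | zero => exact ⟨le_max_left _ _, le_max_right _ _⟩
  | succ s ih =>
    have hadj := Submodule.norm_starProjection_orthogonal_comp_le_adjoint (hK' s)
    rw [adjoint_adjoint] at hadj
    exact ⟨(Submodule.norm_starProjection_orthogonal_comp_le_adjoint (hK s)).trans ih.2,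
      hadj.trans ih.1⟩

end Iteration

theorem Cnorm_one_eq {a b : ℝ} (Z : ℕ → Submodule ℝ (L2ab a b))
    [∀ t, FiniteDimensional ℝ (Z t)] (K : L2ab a b →L[ℝ] L2ab a b) (t : ℕ) :
    Cnorm Z K t 1 = ‖(Z t)ᗮ.starProjection ∘L K‖ := by
  rw [Cnorm, pow_one, Submodule.starProjection_orthogonal]
  rfl

theorem statement0_general
    (a b : ℝ)
    (K : L2ab a b →L[ℝ] L2ab a b)
    (Z : ℕ → Submodule ℝ (L2ab a b)) [∀ t, FiniteDimensional ℝ (Z t)]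
    (hrec : ∀ s : ℕ, Z (s + 1) = polyLt a b 1 ⊔ (Z s).map (K : L2ab a b →ₗ[ℝ] L2ab a b))
    (hrec' : ∀ s : ℕ, Z (s + 1) = polyLt a b 1 ⊔ (Z s).map (ContinuousLinearMap.adjoint K : L2ab a b →ₗ[ℝ] L2ab a b))
    (t : ℕ) :
    Cnorm Z K t 1 ≤ max (Cnorm Z K 0 1) (Cnorm Z (ContinuousLinearMap.adjoint K) 0 1) := by
  simp only [Cnorm_one_eq]
  exact (norm_starProjection_orthogonal_comp_le_max_of_map_le
    (fun s => (hrec s).symm ▸ le_sup_right) (fun s => (hrec' s).symm ▸ le_sup_right) t).1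

/-- For a bounded integral operator `K` on `L²(a,b)` with (piecewise
continuous) kernel `ker`, and finite-dimensional subspaces `Z_0 ⊇ 𝒫_0`,
`Z_t := 𝒫_0 + K(Z_{t-1}) = 𝒫_0 + K^*(Z_{t-1})`, one has
`𝔠_{t,1} = ‖(I - Z_t)K‖ ≤ 𝔠 := max {‖(I - Z_0)K‖, ‖(I - Z_0)K^*‖}` for every `t ≥ 0`. -/
theorem statement0
    (a b : ℝ) (hab : a < b)
    (K : L2ab a b →L[ℝ] L2ab a b) (ker : ℝ → ℝ → ℝ)
    (hker : ∀ f : L2ab a b, ∀ᵐ x ∂μab a b, (K f) x = ∫ y in Ioo a b, ker x y * f y)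
    (Z : ℕ → Submodule ℝ (L2ab a b)) [∀ t, FiniteDimensional ℝ (Z t)]
    (hZ0 : polyLt a b 1 ≤ Z 0)
    (hrec : ∀ s : ℕ, Z (s + 1) = polyLt a b 1 ⊔ (Z s).map (K : L2ab a b →ₗ[ℝ] L2ab a b))
    (hrec' : ∀ s : ℕ, Z (s + 1) = polyLt a b 1 ⊔ (Z s).map (ContinuousLinearMap.adjoint K : L2ab a b →ₗ[ℝ] L2ab a b))
    (t : ℕ) :
    Cnorm Z K t 1 ≤ max (Cnorm Z K 0 1) (Cnorm Z (ContinuousLinearMap.adjoint K) 0 1) :=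
  statement0_general a b K Z hrec hrec' t
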